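/- Let g_rd and g_sd be independent real random variables with g_rd ~ Gamma(m_rd, θ_rd) and g_sd ~ Gamma(m_sd, θ_sd) for integers m_rd, m_sd ≥ 1 and scales θ_rd, θ_sd > 0. Fix P_s, P_r > 0, 0 ≤ C < 1, r > 0, set γ = 2^{2r} − 1 and Q = Ψ_γ(C)/(P_r·θ_rd·(1 − C²)). Then the R–D outage probability P[(P_r·g_rd + P_s·g_sd + 1)² − (P_r·g_rd·C)² < 2^{2r}·(P_s·g_sd + 1)²] equals 1 − (e^{−Q}/(Γ(m_sd)·θ_sd^{m_sd})) · Σ_{m=0}^{m_rd−1} Σ_{k=0}^{m} binom(m,k) · P_s^k · Γ(k + m_sd) · Q^m / ( m! · (P_s·Q + 1/θ_sd)^{k + m_sd} ). -/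

import Mathlib

open MeasureTheory ProbabilityTheory Real Finset

/-- `Psi γ x = √(1 + γ(1 - x²)) - 1`. -/
noncomputable def Psi (γ x : ℝ) : ℝ := Real.sqrt (1 + γ * (1 - x ^ 2)) - 1

/-- The Gamma(m, θ) law (integer shape `m ≥ 1`, scale `θ > 0`), given by its density
`x^(m-1) e^(-x/θ) / ((m-1)! θ^m)` on `[0, ∞)`. -/
noncomputable def gammaLaw (m : ℕ) (θ : ℝ) : Measure ℝ :=
  volume.withDensity fun x =>
    ENNReal.ofReal
      (if 0 ≤ x then x ^ (m - 1) * Real.exp (-x / θ) / ((Nat.factorial (m - 1) : ℝ) * θ ^ m)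
       else 0)

/-!
For `x, y ≥ 0` the outage event is a quadratic inequality in `P_r x` whose relevant root gives
`x < θ_rd Q (P_s y + 1)`. Conditioning on `g_sd = y`, the Erlang tail
`ℙ(g_rd ≥ θ_rd t) = e^{-t} ∑_{j < m_rd} t^j / j!` at `t = Q (P_s y + 1)` is, after a binomial
expansion, a combination of the functions `y^k e^{-P_s Q y}`, whose integrals against the
`Gamma(m_sd, θ_sd)` law are again Gamma integrals.
-/

open Filter Topology
open scoped Nat

noncomputable def gammaDensity (m : ℕ) (θ x : ℝ) : ℝ :=
  if 0 ≤ x then x ^ (m - 1) * exp (-x / θ) / ((m - 1)! * θ ^ m) else 0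

lemma gammaLaw_eq_withDensity (m : ℕ) (θ : ℝ) :
    gammaLaw m θ = volume.withDensity fun x => ENNReal.ofReal (gammaDensity m θ x) := rfl

lemma measurable_gammaDensity (m : ℕ) (θ : ℝ) : Measurable (gammaDensity m θ) :=
  Measurable.ite measurableSet_Ici (by fun_prop) measurable_const

lemma ae_nonneg_gammaLaw (m : ℕ) (θ : ℝ) : ∀ᵐ x ∂gammaLaw m θ, 0 ≤ x := by
  rw [gammaLaw_eq_withDensity, ae_withDensity_iff (measurable_gammaDensity m θ).ennreal_ofReal]
  refine ae_of_all _ fun x hx => ?_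
  by_contra hneg
  simp [gammaDensity, hneg] at hx

/-- `ℙ(N < n)` for `N ~ Poisson(t)`. -/
noncomputable def erlangTail (n : ℕ) (t : ℝ) : ℝ := ∑ j ∈ range n, t ^ j * exp (-t) / j !

@[simp] lemma erlangTail_succ_zero (n : ℕ) : erlangTail (n + 1) 0 = 1 := by
  simp [erlangTail, sum_range_succ']

lemma erlangTail_succ (n : ℕ) :
    erlangTail (n + 1) = fun t => erlangTail n t + t ^ n * exp (-t) / n ! := by
  ext t; exact sum_range_succ _ n

lemma hasDerivAt_erlangTail (n : ℕ) (t : ℝ) :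
    HasDerivAt (erlangTail (n + 1)) (-(t ^ n * exp (-t) / n !)) t := by
  rw [erlangTail_succ]
  induction n with
  | zero => simpa [erlangTail] using (hasDerivAt_neg t).exp
  | succ n ih =>
    have hterm := ((hasDerivAt_pow (n + 1) t).mul (hasDerivAt_neg t).exp).div_const ((n + 1)! : ℝ)
    rw [← erlangTail_succ] at ih
    refine (ih.add hterm).congr_deriv ?_
    rw [Nat.factorial_succ]; push_cast; field_simp; ring

lemma tendsto_erlangTail_atTop (n : ℕ) : Tendsto (erlangTail n) atTop (𝓝 0) := by
  have h := tendsto_finsetSum (range n) fun j _ =>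
    (tendsto_pow_mul_exp_neg_atTop_nhds_zero j).div_const (j ! : ℝ)
  simp only [zero_div, sum_const_zero] at h
  exact h

lemma gammaDensity_nonneg (m : ℕ) {θ : ℝ} (hθ : 0 < θ) (x : ℝ) : 0 ≤ gammaDensity m θ x := by
  unfold gammaDensity
  split_ifs <;> positivity

lemma gammaLaw_Ici (n : ℕ) {θ c : ℝ} (hθ : 0 < θ) (hc : 0 ≤ c) :
    gammaLaw (n + 1) θ (Set.Ici c) = ENNReal.ofReal (erlangTail (n + 1) (c / θ)) := by
  set F : ℝ → ℝ := fun x => -erlangTail (n + 1) (x / θ)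
  have hderiv : ∀ x ∈ Set.Ici c, HasDerivAt F (gammaDensity (n + 1) θ x) x := by
    intro x hx
    refine ((hasDerivAt_erlangTail n (x / θ)).comp x ((hasDerivAt_id x).div_const θ)).neg
      |>.congr_deriv ?_
    simp only [gammaDensity, if_pos (hc.trans hx), Nat.add_sub_cancel, div_pow]
    field_simp
    ring
  have hpos : ∀ x ∈ Set.Ioi c, 0 ≤ gammaDensity (n + 1) θ x :=
    fun x _ => gammaDensity_nonneg _ hθ x
  have hlim : Tendsto F atTop (𝓝 0) := by
    simpa using ((tendsto_erlangTail_atTop _).comp (tendsto_id.atTop_div_const hθ)).neg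
  rw [gammaLaw_eq_withDensity, withDensity_apply _ measurableSet_Ici,
    ← Measure.restrict_congr_set Ioi_ae_eq_Ici,
    ← ofReal_integral_eq_lintegral_ofReal (integrableOn_Ioi_deriv_of_nonneg' hderiv hpos hlim)
      ((ae_restrict_iff' measurableSet_Ioi).mpr (ae_of_all _ hpos)),
    integral_Ioi_of_hasDerivAt_of_nonneg' hderiv hpos hlim]
  simp [F]

lemma isProbabilityMeasure_gammaLaw (n : ℕ) {θ : ℝ} (hθ : 0 < θ) :
    IsProbabilityMeasure (gammaLaw (n + 1) θ) := by
  have hneg : gammaLaw (n + 1) θ (Set.Iio 0) = 0 := by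
    simpa [ae_iff, Set.Iio_def] using ae_nonneg_gammaLaw (n + 1) θ
  constructor
  rw [← Set.Iio_union_Ici, measure_union (Set.Iio_disjoint_Ici le_rfl) measurableSet_Ici, hneg,
    gammaLaw_Ici n hθ le_rfl]
  simp

lemma lintegral_ofReal_gammaDensity (n : ℕ) {θ : ℝ} (hθ : 0 < θ) :
    ∫⁻ x, ENNReal.ofReal (gammaDensity (n + 1) θ x) = 1 := by
  have := (isProbabilityMeasure_gammaLaw n hθ).measure_univ
  rwa [gammaLaw_eq_withDensity, withDensity_apply _ MeasurableSet.univ, Measure.restrict_univ]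
    at this

/-- Exponential tilting by `y ^ k * exp (-b * y)` turns `Gamma(n + 1, θ)` into a multiple of
`Gamma(k + n + 1, 1 / (b + 1 / θ))`. -/
lemma lintegral_pow_mul_exp_gammaLaw (n k : ℕ) {θ b : ℝ} (hθ : 0 < θ) (hb : 0 ≤ b) :
    ∫⁻ y, ENNReal.ofReal (y ^ k * exp (-(b * y))) ∂gammaLaw (n + 1) θ
      = ENNReal.ofReal ((k + n)! / (n ! * θ ^ (n + 1) * (b + 1 / θ) ^ (k + n + 1))) := by
  set r := b + 1 / θ
  have hr : 0 < r := by positivity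
  have htilt : ∀ y,
      ENNReal.ofReal (gammaDensity (n + 1) θ y) * ENNReal.ofReal (y ^ k * exp (-(b * y)))
      = ENNReal.ofReal ((k + n)! / (n ! * θ ^ (n + 1) * r ^ (k + n + 1)))
        * ENNReal.ofReal (gammaDensity (k + n + 1) (1 / r) y) := by
    intro y
    rcases le_or_gt 0 y with hy | hy
    · rw [← ENNReal.ofReal_mul (gammaDensity_nonneg _ hθ y), ← ENNReal.ofReal_mul (by positivity)]
      congr 1
      simp only [gammaDensity, if_pos hy, Nat.add_sub_cancel]
      have hexp : exp (-y / θ) * exp (-(b * y)) = exp (-y / (1 / r)) := by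
        rw [← exp_add]; congr 1; simp only [r]; field_simp; ring
      rw [← hexp, one_div_pow]
      field_simp
      ring
    · simp [gammaDensity, hy.not_ge]
  rw [gammaLaw_eq_withDensity, lintegral_withDensity_eq_lintegral_mul _
    (measurable_gammaDensity _ _).ennreal_ofReal (by fun_prop)]
  simp only [Pi.mul_apply, htilt]
  rw [lintegral_const_mul' _ _ ENNReal.ofReal_ne_top,
    lintegral_ofReal_gammaDensity (k + n) (by positivity), mul_one]

lemma erlangTail_mul_add_one (m : ℕ) (Q P y : ℝ) :
    erlangTail m (Q * (P * y + 1)) = ∑ i ∈ range m, ∑ k ∈ range (i + 1),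
      i.choose k * P ^ k * Q ^ i * exp (-Q) / i ! * (y ^ k * exp (-(P * Q * y))) := by
  have hexp : exp (-(Q * (P * y + 1))) = exp (-Q) * exp (-(P * Q * y)) := by
    rw [← exp_add]; ring_nf
  refine sum_congr rfl fun i _ => ?_
  rw [mul_pow, add_pow, hexp, mul_sum, sum_mul, sum_div]
  refine sum_congr rfl fun k _ => ?_
  ring

lemma lintegral_ofReal_finsetSum {α ι : Type*} [MeasurableSpace α] {μ : Measure α}
    (s : Finset ι) {f : ι → α → ℝ} (hf : ∀ i ∈ s, Measurable (f i))
    (hf_nonneg : ∀ᵐ x ∂μ, ∀ i ∈ s, 0 ≤ f i x) :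
    ∫⁻ x, ENNReal.ofReal (∑ i ∈ s, f i x) ∂μ = ∑ i ∈ s, ∫⁻ x, ENNReal.ofReal (f i x) ∂μ := by
  rw [← lintegral_finsetSum s fun i hi => (hf i hi).ennreal_ofReal]
  exact lintegral_congr_ae (hf_nonneg.mono fun x hx => ENNReal.ofReal_sum_of_nonneg hx)

lemma lintegral_erlangTail_gammaLaw (m n : ℕ) {θ Q P : ℝ} (hθ : 0 < θ) (hQ : 0 ≤ Q)
    (hP : 0 ≤ P) :
    ∫⁻ y, ENNReal.ofReal (erlangTail m (Q * (P * y + 1))) ∂gammaLaw (n + 1) θ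
      = ENNReal.ofReal (exp (-Q) / (n ! * θ ^ (n + 1)) * ∑ i ∈ range m, ∑ k ∈ range (i + 1),
          i.choose k * P ^ k * (k + n)! * Q ^ i / (i ! * (P * Q + 1 / θ) ^ (k + n + 1))) := by
  have hy := ae_nonneg_gammaLaw (n + 1) θ
  have hcoef : ∀ i k, 0 ≤ i.choose k * P ^ k * Q ^ i * exp (-Q) / i ! := fun _ _ => by positivity
  simp_rw [erlangTail_mul_add_one]
  rw [lintegral_ofReal_finsetSum _ (fun _ _ => by fun_prop) (hy.mono fun y hy i _ => by positivity),
    mul_sum, ENNReal.ofReal_sum_of_nonneg fun i _ => by positivity]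
  refine sum_congr rfl fun i _ => ?_
  rw [lintegral_ofReal_finsetSum _ (fun _ _ => by fun_prop) (hy.mono fun y hy k _ => by positivity),
    mul_sum, ENNReal.ofReal_sum_of_nonneg fun k _ => by positivity]
  refine sum_congr rfl fun k _ => ?_
  simp_rw [ENNReal.ofReal_mul (hcoef i k)]
  rw [lintegral_const_mul' _ _ ENNReal.ofReal_ne_top,
    lintegral_pow_mul_exp_gammaLaw n k hθ (by positivity), ← ENNReal.ofReal_mul (hcoef i k)]
  congr 1
  field_simp

lemma gammaLaw_prod_real_lt_affine (m n : ℕ) {θ₁ θ₂ Q P : ℝ} (hθ₁ : 0 < θ₁) (hθ₂ : 0 < θ₂)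
    (hQ : 0 ≤ Q) (hP : 0 ≤ P) :
    ((gammaLaw (m + 1) θ₁).prod (gammaLaw (n + 1) θ₂)).real
        {p | p.1 < θ₁ * Q * (P * p.2 + 1)}
      = 1 - exp (-Q) / (n ! * θ₂ ^ (n + 1)) * ∑ i ∈ range (m + 1), ∑ k ∈ range (i + 1),
          i.choose k * P ^ k * (k + n)! * Q ^ i / (i ! * (P * Q + 1 / θ₂) ^ (k + n + 1)) := by
  have := isProbabilityMeasure_gammaLaw m hθ₁
  have := isProbabilityMeasure_gammaLaw n hθ₂
  set S := {p : ℝ × ℝ | p.1 < θ₁ * Q * (P * p.2 + 1)}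
  have hS : MeasurableSet S := measurableSet_lt (by fun_prop) (by fun_prop)
  have hcompl := probReal_compl_eq_one_sub
    (μ := (gammaLaw (m + 1) θ₁).prod (gammaLaw (n + 1) θ₂)) hS.compl
  rw [compl_compl] at hcompl
  rw [hcompl, measureReal_def, Measure.prod_apply_symm hS.compl,
    ← ENNReal.toReal_ofReal (by positivity : (0 : ℝ) ≤ exp (-Q) / (n ! * θ₂ ^ (n + 1)) * _),
    ← lintegral_erlangTail_gammaLaw (m + 1) n hθ₂ hQ hP]
  congr 2
  refine lintegral_congr_ae ((ae_nonneg_gammaLaw _ _).mono fun y hy => ?_)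
  have hslice : (fun x => (x, y)) ⁻¹' Sᶜ = Set.Ici (θ₁ * Q * (P * y + 1)) := by
    ext x; simp [S]
  dsimp only
  rw [hslice, gammaLaw_Ici m hθ₁ (by positivity)]
  congr 2
  field_simp

lemma one_le_sqrt_one_add_mul {γ C : ℝ} (hγ : 0 ≤ γ) (hC : C ^ 2 ≤ 1) :
    1 ≤ Real.sqrt (1 + γ * (1 - C ^ 2)) :=
  Real.one_le_sqrt.mpr (by nlinarith)

lemma Psi_nonneg {γ C : ℝ} (hγ : 0 ≤ γ) (hC : C ^ 2 ≤ 1) : 0 ≤ Psi γ C :=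
  sub_nonneg.mpr (one_le_sqrt_one_add_mul hγ hC)

/-- Solving the quadratic inequality in `a`: its left root is negative, its right root is
`Psi γ C * b / (1 - C ^ 2)`. -/
lemma add_sq_sub_mul_sq_lt_iff {a b γ C : ℝ} (ha : 0 ≤ a) (hb : 0 < b) (hγ : 0 ≤ γ)
    (hC : C ^ 2 < 1) :
    (a + b) ^ 2 - (a * C) ^ 2 < (1 + γ) * b ^ 2 ↔ a * (1 - C ^ 2) < Psi γ C * b := by
  set s := Real.sqrt (1 + γ * (1 - C ^ 2))
  have hs : s ^ 2 = 1 + γ * (1 - C ^ 2) := Real.sq_sqrt (by nlinarith)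
  have hs1 : 1 ≤ s := one_le_sqrt_one_add_mul hγ hC.le
  have hfactor : ((a + b) ^ 2 - (a * C) ^ 2 - (1 + γ) * b ^ 2) * (1 - C ^ 2)
      = ((1 - C ^ 2) * a + b * (1 + s)) * ((1 - C ^ 2) * a - b * (s - 1)) := by
    linear_combination b ^ 2 * hs
  have hpos : 0 < (1 - C ^ 2) * a + b * (1 + s) := by nlinarith
  unfold Psi
  constructor <;> intro h <;> nlinarith

lemma outage_iff {P_r P_s C γ θ Q x y : ℝ} (hP_r : 0 < P_r) (hP_s : 0 ≤ P_s) (hθ : 0 < θ)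
    (hγ : 0 ≤ γ) (hC : C ^ 2 < 1) (hQ : Q = Psi γ C / (P_r * θ * (1 - C ^ 2))) (hx : 0 ≤ x)
    (hy : 0 ≤ y) :
    (P_r * x + P_s * y + 1) ^ 2 - (P_r * x * C) ^ 2 < (1 + γ) * (P_s * y + 1) ^ 2
      ↔ x < θ * Q * (P_s * y + 1) := by
  have hC' : 0 < 1 - C ^ 2 := by linarith
  have hthreshold : θ * Q * (P_s * y + 1) = Psi γ C * (P_s * y + 1) / (P_r * (1 - C ^ 2)) := by
    rw [hQ]; field_simp
  rw [add_assoc, add_sq_sub_mul_sq_lt_iff (by positivity) (by positivity) hγ hC, hthreshold,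
    lt_div_iff₀ (by positivity)]
  ring_nf

theorem stmt_4
    {Ω : Type*} [MeasurableSpace Ω] (μ : Measure Ω) [IsProbabilityMeasure μ]
    (g_rd g_sd : Ω → ℝ) (hg_rd : Measurable g_rd) (hg_sd : Measurable g_sd)
    (hindep : IndepFun g_rd g_sd μ)
    (m_rd m_sd : ℕ) (hm_rd : 1 ≤ m_rd) (hm_sd : 1 ≤ m_sd)
    (θ_rd θ_sd : ℝ) (hθ_rd : 0 < θ_rd) (hθ_sd : 0 < θ_sd)
    (hlaw_rd : μ.map g_rd = gammaLaw m_rd θ_rd)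
    (hlaw_sd : μ.map g_sd = gammaLaw m_sd θ_sd)
    (P_s P_r : ℝ) (hP_s : 0 < P_s) (hP_r : 0 < P_r)
    (C : ℝ) (hC : C ∈ Set.Ico (0 : ℝ) 1)
    (r : ℝ) (hr : 0 < r)
    (γ Q : ℝ) (hγ : γ = (2 : ℝ) ^ (2 * r) - 1)
    (hQ : Q = Psi γ C / (P_r * θ_rd * (1 - C ^ 2))) :
    (μ {ω | (P_r * g_rd ω + P_s * g_sd ω + 1) ^ 2 - (P_r * g_rd ω * C) ^ 2
          < (2 : ℝ) ^ (2 * r) * (P_s * g_sd ω + 1) ^ 2}).toReal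
      = 1 - (Real.exp (-Q) / (Real.Gamma (m_sd : ℝ) * θ_sd ^ m_sd)) *
          ∑ m ∈ range m_rd, ∑ k ∈ range (m + 1),
            (m.choose k : ℝ) * P_s ^ k * Real.Gamma ((k : ℝ) + m_sd) * Q ^ m /
              ((Nat.factorial m : ℝ) * (P_s * Q + 1 / θ_sd) ^ (k + m_sd)) := by
  obtain ⟨n_rd, rfl⟩ := Nat.exists_eq_add_of_le' hm_rd
  obtain ⟨n_sd, rfl⟩ := Nat.exists_eq_add_of_le' hm_sd
  have hC2 : C ^ 2 < 1 := by nlinarith [hC.1, hC.2]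
  have hK : (2 : ℝ) ^ (2 * r) = 1 + γ := by rw [hγ]; ring
  have hγ0 : 0 ≤ γ := by rw [hγ, sub_nonneg]; exact one_le_rpow (by norm_num) (by positivity)
  have hQ0 : 0 ≤ Q :=
    hQ ▸ div_nonneg (Psi_nonneg hγ0 hC2.le) (mul_nonneg (by positivity) (by linarith))
  set S := {p : ℝ × ℝ | p.1 < θ_rd * Q * (P_s * p.2 + 1)}
  have hevent : {ω | (P_r * g_rd ω + P_s * g_sd ω + 1) ^ 2 - (P_r * g_rd ω * C) ^ 2
      < (2 : ℝ) ^ (2 * r) * (P_s * g_sd ω + 1) ^ 2} =ᵐ[μ] (fun ω => (g_rd ω, g_sd ω)) ⁻¹' S := by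
    refine eventuallyEq_set.mpr ?_
    filter_upwards [ae_of_ae_map hg_rd.aemeasurable (hlaw_rd ▸ ae_nonneg_gammaLaw _ _),
      ae_of_ae_map hg_sd.aemeasurable (hlaw_sd ▸ ae_nonneg_gammaLaw _ _)] with ω hx hy
    rw [hK]
    exact outage_iff hP_r hP_s.le hθ_rd hγ0 hC2 hQ hx hy
  have hmap : μ.map (fun ω => (g_rd ω, g_sd ω))
      = (gammaLaw (n_rd + 1) θ_rd).prod (gammaLaw (n_sd + 1) θ_sd) :=
    hlaw_rd ▸ hlaw_sd ▸ (indepFun_iff_map_prod_eq_prod_map_map hg_rd.aemeasurable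
      hg_sd.aemeasurable).mp hindep
  have hΓ (k : ℕ) : Real.Gamma (k + (n_sd + 1)) = (k + n_sd)! := by
    rw [← add_assoc]; exact_mod_cast Real.Gamma_nat_eq_factorial (k + n_sd)
  rw [← measureReal_def, measureReal_congr hevent,
    ← map_measureReal_apply (hg_rd.prodMk hg_sd) (measurableSet_lt (by fun_prop) (by fun_prop)),
    hmap, gammaLaw_prod_real_lt_affine n_rd n_sd hθ_rd hθ_sd hQ0 hP_s.le, Nat.cast_succ,
    Real.Gamma_nat_eq_factorial]
  simp only [hΓ]
  rfl
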